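/- Let n be a positive integer and let i be a natural number with 2i ≤ n. In the space of skew-symmetric n×n complex matrices (a closed subspace of all n×n matrices with the standard topology), the topological closure of the set {X : Xᵀ = −X and rank X = 2i} equals the set {X : Xᵀ = −X and rank X ≤ 2i}. -/

import Mathlib

/-!
If `X` is skew-symmetric and `X a b ≠ 0`, subtracting the rank-two skew matrix
`u vᵀ - v uᵀ` with `u = (X a b)⁻¹ • X e_a`, `v = X e_b` kills `e_a` and `e_b` without enlarging
the kernel, so the rank drops by two. Iterating, a skew matrix of rank at most `2i` is a sum of
`i` such matrices, i.e. `Bᵀ J B` with `B` a `2i × n` matrix and `J` the standard symplectic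
matrix. Matrices `B` of full row rank `2i` are dense (perturb `B` by `t` times a `2i × 2i` identity
block: only finitely many `t` fail), and for them `Bᵀ J B` has rank exactly `2i`. For the other
inclusion, rank is lower semicontinuous, so the rank-at-most-`2i` locus is closed.
-/

open Matrix

open LinearMap Module Submodule in
theorem LinearMap.finrank_range_add_card_le_of_ker_le {K V W W' : Type*} [Field K]
    [AddCommGroup V] [Module K V] [FiniteDimensional K V] [AddCommGroup W] [Module K W]
    [AddCommGroup W'] [Module K W'] {f : V →ₗ[K] W} {g : V →ₗ[K] W'} (hfg : ker f ≤ ker g)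
    {ι : Type*} [Fintype ι] {w : ι → V} (hw : ∀ k, g (w k) = 0)
    (hfw : LinearIndependent K (f ∘ w)) :
    finrank K (range g) + Fintype.card ι ≤ finrank K (range f) := by
  have hspan : finrank K (span K (Set.range w)) = Fintype.card ι :=
    finrank_span_eq_card hfw.of_comp
  have hinf : span K (Set.range w) ⊓ ker f = ⊥ := (range_ker_disjoint hfw).eq_bot
  have hsup : span K (Set.range w) ⊔ ker f ≤ ker g :=
    sup_le (span_le.2 (Set.range_subset_iff.2 hw)) hfg
  have hdim := finrank_sup_add_finrank_inf_eq (span K (Set.range w)) (ker f)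
  rw [hinf, finrank_bot] at hdim
  have := finrank_mono hsup
  have := f.finrank_range_add_finrank_ker
  have := g.finrank_range_add_finrank_ker
  omega

namespace Matrix

theorem diag_eq_zero_of_transpose_eq_neg {R ι : Type*} [Ring R] [NoZeroDivisors R]
    [NeZero (2 : R)] {X : Matrix ι ι R} (hX : Xᵀ = -X) (a : ι) : X a a = 0 := by
  have h := congr_fun₂ hX a a
  rw [transpose_apply, neg_apply, eq_neg_iff_add_eq_zero, ← two_mul] at h
  exact (mul_eq_zero.1 h).resolve_left two_ne_zero

theorem transpose_mul_J_mul {R l n : Type*} [CommRing R] [Fintype l] [DecidableEq l]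
    (B : Matrix (l ⊕ l) n R) :
    Bᵀ * J l R * B =
      ∑ k, (vecMulVec (B (.inr k)) (B (.inl k)) - vecMulVec (B (.inl k)) (B (.inr k))) := by
  ext x y
  simp [J, mul_apply, Fintype.sum_sum_type, vecMulVec_apply, sum_apply, one_apply]
  ring

section Algebra

variable {K : Type*} [Field K] {n : Type*} [Fintype n]

theorem rank_mul_eq_left_of_rank_eq_card {l m : Type*} [Fintype m] (A : Matrix l m K)
    {B : Matrix m n K} (hB : B.rank = Fintype.card m) : (A * B).rank = A.rank := by
  have htop : LinearMap.range B.mulVecLin = ⊤ :=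
    Submodule.eq_top_of_finrank_eq (hB.trans (Module.finrank_fintype_fun_eq_card K).symm)
  rw [rank, mulVecLin_mul, LinearMap.range_comp, htop, Submodule.map_top]
  rfl

theorem rank_transpose_mul_J_mul {l : Type*} [Fintype l] [DecidableEq l]
    {B : Matrix (l ⊕ l) n K} (hB : B.rank = Fintype.card (l ⊕ l)) :
    (Bᵀ * J l K * B).rank = Fintype.card (l ⊕ l) := by
  rw [rank_mul_eq_left_of_rank_eq_card _ hB,
    rank_mul_eq_left_of_isUnit_det _ _ (isUnit_det_J l K), rank_transpose, hB]

variable [DecidableEq n] [NeZero (2 : K)]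

theorem exists_rank_sub_add_two_le {X : Matrix n n K} (hX : Xᵀ = -X) (h0 : X ≠ 0) :
    ∃ u v : n → K, (X - (vecMulVec u v - vecMulVec v u)).rank + 2 ≤ X.rank := by
  obtain ⟨a, b, hab⟩ : ∃ a b, X a b ≠ 0 := by
    by_contra! h
    exact h0 (ext h)
  have hskew (x y : n) : X y x = -X x y := by simpa using congr_fun₂ hX x y
  have hdiag := diag_eq_zero_of_transpose_eq_neg hX
  have hdot (c : n) (w : n → K) : X.col c ⬝ᵥ w = -(X *ᵥ w) c := by
    simp [dotProduct, mulVec, hskew c, Finset.sum_neg_distrib]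
  set u := (X a b)⁻¹ • X.col a
  set v := X.col b
  have hY (w : n → K) : (vecMulVec u v - vecMulVec v u) *ᵥ w = (v ⬝ᵥ w) • u - (u ⬝ᵥ w) • v := by
    simp [sub_mulVec, vecMulVec_mulVec, op_smul_eq_smul]
  refine ⟨u, v, ?_⟩
  have hker : LinearMap.ker X.mulVecLin ≤
      LinearMap.ker (X - (vecMulVec u v - vecMulVec v u)).mulVecLin := by
    intro w hw
    simp only [LinearMap.mem_ker, mulVecLin_apply] at hw ⊢
    rw [sub_mulVec, hY, hw]
    simp [u, v, hdot, hw]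
  have hcols : X.mulVecLin ∘ ![Pi.single a 1, Pi.single b 1] = ![X.col a, X.col b] := by
    ext k : 1
    fin_cases k <;> simp
  have hind : LinearIndependent K ![X.col a, X.col b] := by
    refine LinearIndependent.pair_iff.2 fun s t hst => ?_
    have ha := congr_fun hst a
    have hb := congr_fun hst b
    simp [hdiag, hskew a b, hab] at ha hb
    exact ⟨hb, ha⟩
  have key := LinearMap.finrank_range_add_card_le_of_ker_le hker
    (w := ![Pi.single a 1, Pi.single b 1]) ?_ (hcols ▸ hind)
  · simpa [rank] using key
  · intro k
    fin_cases k <;> simp only [mulVecLin_apply, sub_mulVec, hY] <;>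
      simp [u, v, hdiag, hskew a b, hab]

theorem exists_eq_sum_vecMulVec_sub_vecMulVec {X : Matrix n n K} (hX : Xᵀ = -X) {i : ℕ}
    (hr : X.rank ≤ 2 * i) :
    ∃ u v : Fin i → n → K, X = ∑ k, (vecMulVec (u k) (v k) - vecMulVec (v k) (u k)) := by
  induction i generalizing X with
  | zero =>
    have h0 : X = 0 := by
      by_contra h0
      obtain ⟨u, v, huv⟩ := exists_rank_sub_add_two_le hX h0
      omega
    exact ⟨0, 0, by simp [h0]⟩
  | succ i ih =>
    by_cases h0 : X = 0
    · exact ⟨0, 0, by simp [h0]⟩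
    obtain ⟨u, v, huv⟩ := exists_rank_sub_add_two_le hX h0
    have hskew :
        (X - (vecMulVec u v - vecMulVec v u))ᵀ = -(X - (vecMulVec u v - vecMulVec v u)) := by
      simp only [transpose_sub, hX, transpose_vecMulVec]
      abel
    obtain ⟨U, V, hUV⟩ := ih hskew (by omega)
    refine ⟨Fin.cons u U, Fin.cons v V, ?_⟩
    rw [Fin.sum_univ_succ]
    simp only [Fin.cons_zero, Fin.cons_succ, ← hUV]
    abel

end Algebra

section Topology

variable {𝕜 : Type*} [NontriviallyNormedField 𝕜] [CompleteSpace 𝕜] {m n : Type*} [Fintype m]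
  [Fintype n]

theorem isClosed_setOf_rank_le (k : ℕ) : IsClosed {A : Matrix m n 𝕜 | A.rank ≤ k} := by
  let toCLM : Matrix m n 𝕜 →ₗ[𝕜] (n → 𝕜) →L[𝕜] m → 𝕜 :=
    LinearMap.toContinuousLinearMap.toLinearMap ∘ₗ mulVecBilin 𝕜 𝕜
  have hrank (A : Matrix m n 𝕜) : (toCLM A : (n → 𝕜) →ₗ[𝕜] m → 𝕜).rank = A.rank :=
    (Module.finrank_eq_rank _ _).symm
  refine isOpen_compl_iff.1 ?_
  convert (isOpen_setOfPred_nat_le_rank (k + 1)).preimage toCLM.continuous_of_finiteDimensional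
  ext A
  rw [Set.mem_preimage, Set.mem_ofPred_eq, hrank, Set.mem_compl_iff, Set.mem_ofPred_eq]
  norm_cast
  omega

theorem mem_closure_setOf_rank_eq_card (h : Fintype.card m ≤ Fintype.card n)
    (B : Matrix m n 𝕜) : B ∈ closure {A : Matrix m n 𝕜 | A.rank = Fintype.card m} := by
  classical
  obtain ⟨e⟩ := Function.Embedding.nonempty_of_card_le h
  let C : Matrix m n 𝕜 := (1 : Matrix n n 𝕜).submatrix e id
  have hC : C.submatrix id e = 1 := submatrix_one_embedding e
  have hrank (t : 𝕜) (ht : t ∉ spectrum 𝕜 (-B.submatrix id e)) :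
      (B + t • C).rank = Fintype.card m := by
    refine le_antisymm (rank_le_card_height _) ?_
    have hunit : IsUnit ((B + t • C).submatrix id e) := by
      rw [spectrum.notMem_iff, Algebra.algebraMap_eq_smul_one, sub_neg_eq_add, add_comm] at ht
      simpa [submatrix_add, submatrix_smul, hC] using ht
    calc Fintype.card m = ((B + t • C).submatrix id e).rank := (rank_of_isUnit _ hunit).symm
      _ ≤ (B + t • C).rank := rank_submatrix_le (B + t • C) id e
  have hdense : (0 : 𝕜) ∈ closure (spectrum 𝕜 (-B.submatrix id e))ᶜ :=
    (finite_spectrum (-B.submatrix id e)).countable.dense_compl 𝕜 0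
  have hcont : Continuous fun t : 𝕜 => B + t • C := by fun_prop
  simpa using map_mem_closure (t := {A : Matrix m n 𝕜 | A.rank = Fintype.card m})
    hcont hdense hrank

theorem sum_vecMulVec_sub_vecMulVec_mem_closure {i : ℕ} (hi : 2 * i ≤ Fintype.card n)
    (u v : Fin i → n → 𝕜) :
    ∑ k, (vecMulVec (u k) (v k) - vecMulVec (v k) (u k)) ∈
      closure {X : Matrix n n 𝕜 | Xᵀ = -X ∧ X.rank = 2 * i} := by
  have hcard : Fintype.card (Fin i ⊕ Fin i) = 2 * i := by simp [two_mul]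
  have hB := mem_closure_setOf_rank_eq_card (hcard ▸ hi) (of (Sum.elim v u))
  have hcont : Continuous fun B : Matrix (Fin i ⊕ Fin i) n 𝕜 => Bᵀ * J (Fin i) 𝕜 * B := by
    fun_prop
  have hmaps : Set.MapsTo (fun B => Bᵀ * J (Fin i) 𝕜 * B)
      {B : Matrix (Fin i ⊕ Fin i) n 𝕜 | B.rank = Fintype.card (Fin i ⊕ Fin i)}
      {X : Matrix n n 𝕜 | Xᵀ = -X ∧ X.rank = 2 * i} := by
    intro B hB
    exact ⟨by simp [transpose_mul, J_transpose, Matrix.mul_assoc],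
      by rw [rank_transpose_mul_J_mul hB, hcard]⟩
  have := map_mem_closure hcont hB hmaps
  rwa [transpose_mul_J_mul] at this

end Topology

end Matrix

theorem closure_skew_rank_eq_eq_skew_rank_le_general (n i : ℕ) (hi : 2 * i ≤ n) :
    closure {X : Matrix (Fin n) (Fin n) ℂ | Xᵀ = -X ∧ X.rank = 2 * i} =
      {X : Matrix (Fin n) (Fin n) ℂ | Xᵀ = -X ∧ X.rank ≤ 2 * i} := by
  refine subset_antisymm (closure_minimal (fun X hX => ⟨hX.1, hX.2.le⟩) ?_) ?_
  · exact (isClosed_eq continuous_id.matrix_transpose continuous_neg).inter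
      (isClosed_setOf_rank_le _)
  · rintro X ⟨hX, hr⟩
    obtain ⟨u, v, rfl⟩ := exists_eq_sum_vecMulVec_sub_vecMulVec hX hr
    exact sum_vecMulVec_sub_vecMulVec_mem_closure (by simpa using hi) u v

/-- In the space of skew-symmetric `n × n` complex matrices (a closed subspace of all `n × n`
matrices with the standard topology), for `2i ≤ n`, the topological closure of the set of
skew-symmetric matrices of rank exactly `2i` equals the set of skew-symmetric matrices of
rank at most `2i`. -/
theorem closure_skew_rank_eq_eq_skew_rank_le (n i : ℕ) (hn : 0 < n) (hi : 2 * i ≤ n) :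
    closure {X : Matrix (Fin n) (Fin n) ℂ | Xᵀ = -X ∧ X.rank = 2 * i} =
      {X : Matrix (Fin n) (Fin n) ℂ | Xᵀ = -X ∧ X.rank ≤ 2 * i} :=
  closure_skew_rank_eq_eq_skew_rank_le_general n i hi
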